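/- arXiv:0806.3910 — 3 statements merged into one kernel-verified Lean document; each statement's English description precedes it below -/
import Mathlib

section
/- Let X = (x_{ij}) be an m × n matrix of independent geometric random variables with E x_{ij} = z_{ij} > 0, let S be a nonempty set of index pairs, σ = ∑_{(i,j)∈S} z_{ij}, ν = ∑_{(i,j)∈S} z_{ij}². Then for any real a and any 0 < t ≤ 2, P(∑_{(i,j)∈S} x_{ij} ≤ σ − a) ≤ exp(−ta + (t²/2)(σ + ν)). -/
/-!
Chernoff's bound at the parameter `-t`. A geometric variable with mean `z` has
`E e^{-tx} = (1 + z (1 - e^{-t}))⁻¹`; since `t - t²/2 ≤ 1 - e^{-t} ≤ t` and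
`(1 + w)⁻¹ ≤ exp (-w + w²/2)` for `w ≥ 0`, this is at most `exp (-tz + t²/2 (z + z²))`.
By independence the moment generating function of the sum is the product of these factors,
whose exponents add up to `-tσ + t²/2 (σ + ν)`.
-/

open MeasureTheory ProbabilityTheory Real

theorem Real.exp_neg_le_one_sub_add_sq_div_two {t : ℝ} (ht : 0 ≤ t) :
    exp (-t) ≤ 1 - t + t ^ 2 / 2 := by
  -- `(1 + t + t²/2)(1 - t + t²/2) = 1 + t⁴/4 ≥ 1` and `1 + t + t²/2 ≤ exp t`.
  have hpos : 0 < 1 + t + t ^ 2 / 2 := by positivity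
  rw [exp_neg]
  calc (exp t)⁻¹ ≤ (1 + t + t ^ 2 / 2)⁻¹ := inv_anti₀ hpos (quadratic_le_exp_of_nonneg ht)
    _ ≤ 1 - t + t ^ 2 / 2 := by
      rw [inv_le_iff_one_le_mul₀' hpos]
      nlinarith [pow_nonneg ht 4]

theorem Real.sub_sq_div_two_le_log_one_add {x : ℝ} (hx : 0 ≤ x) :
    x - x ^ 2 / 2 ≤ log (1 + x) := by
  refine le_trans ?_ (le_log_one_add_of_nonneg hx)
  rw [le_div_iff₀ (by positivity)]
  nlinarith [pow_nonneg hx 3]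

theorem Real.inv_one_add_le_exp {x : ℝ} (hx : 0 ≤ x) :
    (1 + x)⁻¹ ≤ exp (-x + x ^ 2 / 2) := by
  have hpos : 0 < 1 + x := by positivity
  rw [show -x + x ^ 2 / 2 = -(x - x ^ 2 / 2) by ring, exp_neg]
  refine inv_anti₀ (exp_pos _) ?_
  calc exp (x - x ^ 2 / 2) ≤ exp (log (1 + x)) :=
        exp_le_exp.mpr (sub_sq_div_two_le_log_one_add hx)
    _ = 1 + x := exp_log hpos

theorem inv_one_add_mul_one_sub_exp_neg_le {z t : ℝ} (hz : 0 ≤ z) (ht : 0 ≤ t) :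
    (1 + z * (1 - exp (-t)))⁻¹ ≤ exp (-(t * z) + t ^ 2 / 2 * (z + z ^ 2)) := by
  set e := 1 - exp (-t)
  have he_lower : t - t ^ 2 / 2 ≤ e := by linarith [exp_neg_le_one_sub_add_sq_div_two ht]
  have he_upper : e ≤ t := by linarith [one_sub_le_exp_neg t]
  have he_nonneg : 0 ≤ e := sub_nonneg.mpr (exp_le_one_iff.mpr (neg_nonpos.mpr ht))
  refine (inv_one_add_le_exp (mul_nonneg hz he_nonneg)).trans (exp_le_exp.mpr ?_)
  have hsq : (z * e) ^ 2 ≤ (z * t) ^ 2 :=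
    pow_le_pow_left₀ (mul_nonneg hz he_nonneg) (mul_le_mul_of_nonneg_left he_upper hz) 2
  nlinarith [mul_le_mul_of_nonneg_left he_lower hz]

section Moments

variable {Ω : Type*} [MeasurableSpace Ω] {μ : Measure Ω}

theorem integrable_exp_mul_natCast [IsFiniteMeasure μ] {X : Ω → ℕ} (hX : Measurable X)
    {s : ℝ} (hs : s ≤ 0) : Integrable (fun ω => exp (s * X ω)) μ := by
  refine .of_bound (by fun_prop) 1 (ae_of_all _ fun ω => ?_)
  rw [norm_of_nonneg (exp_pos _).le, exp_le_one_iff]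
  exact mul_nonpos_of_nonpos_of_nonneg hs (Nat.cast_nonneg _)

theorem mgf_natCast_of_geometric [IsFiniteMeasure μ] {X : Ω → ℕ} (hX : Measurable X)
    {p q s : ℝ} (hp : 0 ≤ p) (hq : 0 ≤ q) (hq1 : q < 1) (hs : s ≤ 0)
    (hlaw : ∀ k, μ {ω | X ω = k} = ENNReal.ofReal (p * q ^ k)) :
    mgf (fun ω => (X ω : ℝ)) μ s = p / (1 - q * exp s) := by
  have hr0 : 0 ≤ q * exp s := mul_nonneg hq (exp_pos s).le
  have hr1 : q * exp s < 1 :=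
    (mul_le_of_le_one_right hq (exp_le_one_iff.mpr hs)).trans_lt hq1
  calc mgf (fun ω => (X ω : ℝ)) μ s
      = ∫ k : ℕ, exp (s * k) ∂(μ.map X) :=
        (integral_map (f := fun k : ℕ => exp (s * k)) hX.aemeasurable (by fun_prop)).symm
    _ = ∑' k : ℕ, (μ.map X).real {k} • exp (s * k) :=
        integral_countable (integrable_exp_mul_natCast measurable_id hs)
    _ = ∑' k : ℕ, p * (q * exp s) ^ k := by
        refine tsum_congr fun k => ?_
        rw [measureReal_def, Measure.map_apply hX (measurableSet_singleton k),
          show X ⁻¹' {k} = {ω | X ω = k} from rfl, hlaw k,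
          ENNReal.toReal_ofReal (by positivity), smul_eq_mul, mul_pow, ← exp_nat_mul]
        ring_nf
    _ = p / (1 - q * exp s) := by
        rw [tsum_mul_left, tsum_geometric_of_lt_one hr0 hr1, div_eq_mul_inv]

theorem mgf_neg_le_of_geometric [IsFiniteMeasure μ] {X : Ω → ℕ} (hX : Measurable X)
    {z t : ℝ} (hz : 0 ≤ z) (ht : 0 ≤ t)
    (hlaw : ∀ k, μ {ω | X ω = k} = ENNReal.ofReal ((1 / (1 + z)) * (z / (1 + z)) ^ k)) :
    mgf (fun ω => (X ω : ℝ)) μ (-t) ≤ exp (-(t * z) + t ^ 2 / 2 * (z + z ^ 2)) := by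
  have hpos : 0 < 1 + z := by positivity
  rw [mgf_natCast_of_geometric hX (by positivity) (by positivity)
    ((div_lt_one hpos).mpr (by linarith)) (neg_nonpos.mpr ht) hlaw]
  convert inv_one_add_mul_one_sub_exp_neg_le hz ht using 1
  field_simp
  ring

theorem measureReal_sum_le_le_exp_mul_prod_mgf [IsProbabilityMeasure μ] {ι : Type*}
    {Y : ι → Ω → ℝ} (hindep : iIndepFun Y μ) (hmeas : ∀ i, Measurable (Y i))
    (S : Finset ι) {s : ℝ} (hs : s ≤ 0)
    (hint : ∀ i ∈ S, Integrable (fun ω => exp (s * Y i ω)) μ) (ε : ℝ) :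
    μ.real {ω | ∑ i ∈ S, Y i ω ≤ ε} ≤ exp (-s * ε) * ∏ i ∈ S, mgf (Y i) μ s := by
  rw [← hindep.mgf_sum hmeas]
  simpa only [Finset.sum_apply] using
    measure_le_le_exp_mul_mgf ε hs (hindep.integrable_exp_mul_sum hmeas hint)

end Moments

theorem geometric_sum_lower_tail_general
    {m n : ℕ} {Ω : Type*} [MeasurableSpace Ω] (μ : Measure Ω) [IsProbabilityMeasure μ]
    (X : Fin m × Fin n → Ω → ℕ) (z : Fin m × Fin n → ℝ)
    (hz : ∀ ij, 0 < z ij)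
    (hmeas : ∀ ij, Measurable (X ij))
    (hindep : iIndepFun X μ)
    (hdist : ∀ ij k, μ {ω | X ij ω = k}
      = ENNReal.ofReal ((1 / (1 + z ij)) * (z ij / (1 + z ij)) ^ k))
    (S : Finset (Fin m × Fin n))
    (σ ν : ℝ) (hσ : σ = ∑ ij ∈ S, z ij) (hν : ν = ∑ ij ∈ S, (z ij) ^ 2)
    (a t : ℝ) (ht0 : 0 < t) :
    μ {ω | (∑ ij ∈ S, (X ij ω : ℝ)) ≤ σ - a}
      ≤ ENNReal.ofReal (Real.exp (-(t * a) + t ^ 2 / 2 * (σ + ν))) := by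
  have hchernoff := measureReal_sum_le_le_exp_mul_prod_mgf
    (hindep.comp (fun _ => (Nat.cast : ℕ → ℝ)) fun _ => measurable_from_top)
    (fun ij => measurable_from_top.comp (hmeas ij)) S (neg_nonpos.mpr ht0.le)
    (fun ij _ => integrable_exp_mul_natCast (hmeas ij) (neg_nonpos.mpr ht0.le)) (σ - a)
  have hmgf := fun ij => mgf_neg_le_of_geometric (hmeas ij) (hz ij).le ht0.le (hdist ij)
  have hprod : ∏ ij ∈ S, mgf (fun ω => (X ij ω : ℝ)) μ (-t)
      ≤ exp (-(t * σ) + t ^ 2 / 2 * (σ + ν)) := by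
    calc _ ≤ ∏ ij ∈ S, exp (-(t * z ij) + t ^ 2 / 2 * (z ij + z ij ^ 2)) :=
          Finset.prod_le_prod (fun ij _ => mgf_nonneg) fun ij _ => hmgf ij
      _ = exp (-(t * σ) + t ^ 2 / 2 * (σ + ν)) := by
          rw [← exp_sum, hσ, hν, ← Finset.sum_add_distrib, Finset.mul_sum, Finset.mul_sum,
            ← Finset.sum_neg_distrib, ← Finset.sum_add_distrib]
  rw [ENNReal.le_ofReal_iff_toReal_le (measure_ne_top μ _) (exp_pos _).le]
  calc _ ≤ exp (-(-t) * (σ - a)) * exp (-(t * σ) + t ^ 2 / 2 * (σ + ν)) :=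
        hchernoff.trans (mul_le_mul_of_nonneg_left hprod (exp_pos _).le)
    _ = exp (-(t * a) + t ^ 2 / 2 * (σ + ν)) := by rw [← exp_add]; ring_nf

/-- Large deviation bound (lower tail) for a sum of independent geometric random
variables `x_{ij}` with `E x_{ij} = z_{ij} > 0`: for any real `a` and `0 < t ≤ 2`,
`P(∑_{(i,j)∈S} x_{ij} ≤ σ - a) ≤ exp(-ta + (t²/2)(σ + ν))`, where
`σ = ∑_S z_{ij}` and `ν = ∑_S z_{ij}²`. -/
theorem geometric_sum_lower_tail
    {m n : ℕ} {Ω : Type*} [MeasurableSpace Ω] (μ : Measure Ω) [IsProbabilityMeasure μ]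
    (X : Fin m × Fin n → Ω → ℕ) (z : Fin m × Fin n → ℝ)
    (hz : ∀ ij, 0 < z ij)
    (hmeas : ∀ ij, Measurable (X ij))
    (hindep : iIndepFun X μ)
    (hdist : ∀ ij k, μ {ω | X ij ω = k}
      = ENNReal.ofReal ((1 / (1 + z ij)) * (z ij / (1 + z ij)) ^ k))
    (S : Finset (Fin m × Fin n)) (hS : S.Nonempty)
    (σ ν : ℝ) (hσ : σ = ∑ ij ∈ S, z ij) (hν : ν = ∑ ij ∈ S, (z ij) ^ 2)
    (a t : ℝ) (ht0 : 0 < t) (ht2 : t ≤ 2) :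
    μ {ω | (∑ ij ∈ S, (X ij ω : ℝ)) ≤ σ - a}
      ≤ ENNReal.ofReal (Real.exp (-(t * a) + t ^ 2 / 2 * (σ + ν))) :=
  geometric_sum_lower_tail_general μ X z hz hmeas hindep hdist S σ ν hσ hν a t ht0
end

section
/- Let X = (x_{ij}) be an m × n matrix of independent geometric random variables with E x_{ij} = z_{ij} > 0, let S be a nonempty set of index pairs, σ = ∑_{(i,j)∈S} z_{ij}, ν = ∑_{(i,j)∈S} z_{ij}². Then for any real a and any t with 0 < t ≤ 1/3 and t ≤ 1/(2 z_{ij}) for all (i,j) ∈ S, P(∑_{(i,j)∈S} x_{ij} ≥ σ + a) ≤ exp(−ta + 2t²(σ + ν)). -/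
/-!
Chernoff's bound reduces the tail estimate to the moment generating function of the sum, which
by independence is the product of the individual ones. A geometric variable with mean `z` has
`E e^{tx} = 1 / (1 - z (e^t - 1))` as long as `z (e^t - 1) < 1`, and for `t ≤ 1/3`, `z t ≤ 1/2`
the elementary bound `e^t ≤ 1 + t + 3t²/4` shows this is at most `exp (t z + 2 t² (z + z²))`.
The product of these bounds over `S` is `exp (t σ + 2 t² (σ + ν))`.
-/

open MeasureTheory ProbabilityTheory Real

section ElementaryBounds

variable {z t : ℝ}

lemma exp_le_one_add_add_three_quarters_sq (h0 : 0 ≤ t) (h1 : t ≤ 1) :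
    exp t ≤ 1 + t + 3 / 4 * t ^ 2 := by
  have h := exp_bound' h0 h1 (n := 2) (by norm_num)
  norm_num [Finset.sum_range_succ, Nat.factorial] at h
  nlinarith

lemma mul_exp_sub_one_le (hz : 0 ≤ z) (h0 : 0 ≤ t) (h1 : t ≤ 1) :
    z * (exp t - 1) ≤ z * t + 3 / 4 * (z * t) * t := by
  have := exp_le_one_add_add_three_quarters_sq h0 h1
  nlinarith

lemma mul_exp_sub_one_lt_one (hz : 0 ≤ z) (h0 : 0 ≤ t) (h3 : t ≤ 1 / 3)
    (hzt : z * t ≤ 1 / 2) :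
    z * (exp t - 1) < 1 := by
  have := mul_exp_sub_one_le hz h0 (h3.trans (by norm_num))
  nlinarith [mul_nonneg hz h0]

lemma one_div_one_sub_mul_exp_sub_one_le (hz : 0 ≤ z) (h0 : 0 ≤ t) (h3 : t ≤ 1 / 3)
    (hzt : z * t ≤ 1 / 2) :
    1 / (1 - z * (exp t - 1)) ≤ exp (t * z + 2 * t ^ 2 * (z + z ^ 2)) := by
  set s := z * t with hs
  have hs0 : 0 ≤ s := mul_nonneg hz h0
  have hu : z * (exp t - 1) ≤ s + 3 / 4 * s * t :=
    mul_exp_sub_one_le hz h0 (h3.trans (by norm_num))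
  have hv : s + 3 / 4 * s * t < 1 := by nlinarith
  set w := s + 2 * s * t + 2 * s ^ 2 with hw
  have hw0 : 0 ≤ w := by positivity
  have hquad : 1 ≤ (1 - (s + 3 / 4 * s * t)) * (1 + w + w ^ 2 / 2) := by
    nlinarith [sq_nonneg s, sq_nonneg t, sq_nonneg (s * t), mul_nonneg hs0 h0,
      sq_nonneg (1 - 2 * s), sq_nonneg (s - t),
      mul_nonneg (mul_nonneg hs0 hs0) h0, mul_nonneg (mul_nonneg hs0 h0) h0]
  calc 1 / (1 - z * (exp t - 1))
      ≤ 1 / (1 - (s + 3 / 4 * s * t)) := one_div_le_one_div_of_le (by linarith) (by linarith)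
    _ ≤ 1 + w + w ^ 2 / 2 := by rw [div_le_iff₀ (by linarith)]; linarith
    _ ≤ exp w := quadratic_le_exp_of_nonneg hw0
    _ = exp (t * z + 2 * t ^ 2 * (z + z ^ 2)) := by rw [hw, hs]; ring_nf

end ElementaryBounds

section Geometric

variable {Ω : Type*} [MeasurableSpace Ω] {μ : Measure Ω} {X : Ω → ℕ} {z t : ℝ}

lemma lintegral_exp_mul_of_geometric (hX : Measurable X) (hz : 0 ≤ z)
    (hlaw : ∀ k, μ {ω | X ω = k} = ENNReal.ofReal (1 / (1 + z) * (z / (1 + z)) ^ k))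
    (hzt : z * (exp t - 1) < 1) :
    ∫⁻ ω, ENNReal.ofReal (exp (t * X ω)) ∂μ
      = ENNReal.ofReal (1 / (1 - z * (exp t - 1))) := by
  have h1z : 0 < 1 + z := by linarith
  set r := z / (1 + z) * exp t with hr
  have hr0 : 0 ≤ r := by positivity
  have hr1 : r < 1 := by
    rw [hr, div_mul_eq_mul_div, div_lt_one h1z]; linarith
  have hterm : ∀ k : ℕ, ENNReal.ofReal (exp (t * k)) * μ.map X {k}
      = ENNReal.ofReal (1 / (1 + z) * r ^ k) := by
    intro k
    rw [Measure.map_apply hX (measurableSet_singleton k),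
      show X ⁻¹' {k} = {ω | X ω = k} from rfl, hlaw,
      ← ENNReal.ofReal_mul (exp_pos _).le, mul_comm t, exp_nat_mul, hr, mul_pow]
    ring_nf
  calc ∫⁻ ω, ENNReal.ofReal (exp (t * X ω)) ∂μ
      = ∫⁻ k, ENNReal.ofReal (exp (t * (k : ℝ))) ∂μ.map X :=
        (lintegral_map (f := fun k : ℕ => ENNReal.ofReal (exp (t * k)))
          measurable_from_top hX).symm
    _ = ∑' k : ℕ, ENNReal.ofReal (1 / (1 + z) * r ^ k) := by
        rw [lintegral_countable']; exact tsum_congr hterm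
    _ = ENNReal.ofReal (1 / (1 + z) * (1 - r)⁻¹) := by
        rw [← ENNReal.ofReal_tsum_of_nonneg (fun k => by positivity)
          ((summable_geometric_of_lt_one hr0 hr1).mul_left _), tsum_mul_left,
          tsum_geometric_of_lt_one hr0 hr1]
    _ = ENNReal.ofReal (1 / (1 - z * (exp t - 1))) := by
        congr 1
        rw [hr, one_div, one_div, ← mul_inv]
        congr 1
        field_simp
        ring

lemma integrable_exp_mul_of_geometric (hX : Measurable X) (hz : 0 ≤ z)
    (hlaw : ∀ k, μ {ω | X ω = k} = ENNReal.ofReal (1 / (1 + z) * (z / (1 + z)) ^ k))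
    (hzt : z * (exp t - 1) < 1) :
    Integrable (fun ω => exp (t * X ω)) μ := by
  refine ⟨(measurable_from_top.comp hX).const_mul t |>.exp.aestronglyMeasurable, ?_⟩
  rw [hasFiniteIntegral_iff_ofReal (.of_forall fun ω => (exp_pos _).le),
    lintegral_exp_mul_of_geometric hX hz hlaw hzt]
  exact ENNReal.ofReal_lt_top

lemma mgf_of_geometric (hX : Measurable X) (hz : 0 ≤ z)
    (hlaw : ∀ k, μ {ω | X ω = k} = ENNReal.ofReal (1 / (1 + z) * (z / (1 + z)) ^ k))
    (hzt : z * (exp t - 1) < 1) :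
    mgf (fun ω => (X ω : ℝ)) μ t = 1 / (1 - z * (exp t - 1)) := by
  rw [mgf, integral_eq_lintegral_of_nonneg_ae (.of_forall fun ω => (exp_pos _).le)
      (integrable_exp_mul_of_geometric hX hz hlaw hzt).aestronglyMeasurable,
    lintegral_exp_mul_of_geometric hX hz hlaw hzt,
    ENNReal.toReal_ofReal (one_div_nonneg.mpr (by linarith))]

end Geometric

lemma measure_sum_ge_le_of_iIndepFun_of_mgf_le {Ω ι : Type*} [MeasurableSpace Ω]
    {μ : Measure Ω} {Y : ι → Ω → ℝ} (hindep : iIndepFun Y μ) (hmeas : ∀ i, Measurable (Y i))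
    {s : Finset ι} {t : ℝ} (ht : 0 ≤ t)
    (hint : ∀ i ∈ s, Integrable (fun ω => exp (t * Y i ω)) μ)
    {c : ι → ℝ} (hmgf : ∀ i ∈ s, mgf (Y i) μ t ≤ exp (c i)) (ε : ℝ) :
    μ {ω | ε ≤ ∑ i ∈ s, Y i ω} ≤ ENNReal.ofReal (exp (-t * ε + ∑ i ∈ s, c i)) := by
  have := hindep.isProbabilityMeasure
  have hchernoff := measure_ge_le_exp_mul_mgf ε ht (hindep.integrable_exp_mul_sum hmeas hint)
  rw [hindep.mgf_sum hmeas] at hchernoff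
  have hprod : ∏ i ∈ s, mgf (Y i) μ t ≤ exp (∑ i ∈ s, c i) := by
    rw [exp_sum]
    exact Finset.prod_le_prod (fun i _ => mgf_nonneg) hmgf
  rw [← ENNReal.ofReal_toReal (measure_ne_top μ _), exp_add]
  refine ENNReal.ofReal_le_ofReal (calc
    μ.real {ω | ε ≤ ∑ i ∈ s, Y i ω} ≤ exp (-t * ε) * ∏ i ∈ s, mgf (Y i) μ t := by
      simpa only [Finset.sum_apply] using hchernoff
    _ ≤ exp (-t * ε) * exp (∑ i ∈ s, c i) := by gcongr)

theorem geometric_sum_upper_tail_general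
    {m n : ℕ} {Ω : Type*} [MeasurableSpace Ω] (μ : Measure Ω)
    (X : Fin m × Fin n → Ω → ℕ) (z : Fin m × Fin n → ℝ)
    (hz : ∀ ij, 0 < z ij)
    (hmeas : ∀ ij, Measurable (X ij))
    (hindep : iIndepFun X μ)
    (hdist : ∀ ij k, μ {ω | X ij ω = k}
      = ENNReal.ofReal ((1 / (1 + z ij)) * (z ij / (1 + z ij)) ^ k))
    (S : Finset (Fin m × Fin n))
    (σ ν : ℝ) (hσ : σ = ∑ ij ∈ S, z ij) (hν : ν = ∑ ij ∈ S, (z ij) ^ 2)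
    (a t : ℝ) (ht0 : 0 < t) (ht3 : t ≤ 1 / 3)
    (htz : ∀ ij ∈ S, t ≤ 1 / (2 * z ij)) :
    μ {ω | σ + a ≤ (∑ ij ∈ S, (X ij ω : ℝ))}
      ≤ ENNReal.ofReal (Real.exp (-(t * a) + 2 * t ^ 2 * (σ + ν))) := by
  have hzt : ∀ ij ∈ S, z ij * t ≤ 1 / 2 := fun ij hij => by
    have := htz ij hij
    rw [le_div_iff₀ (by linarith [hz ij])] at this
    linarith
  have hlt : ∀ ij ∈ S, z ij * (exp t - 1) < 1 := fun ij hij =>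
    mul_exp_sub_one_lt_one (hz ij).le ht0.le ht3 (hzt ij hij)
  have htail := measure_sum_ge_le_of_iIndepFun_of_mgf_le (Y := fun ij ω => (X ij ω : ℝ))
    (hindep.comp _ fun _ => measurable_from_top) (fun ij => measurable_from_top.comp (hmeas ij))
    ht0.le
    (fun ij hij => integrable_exp_mul_of_geometric (hmeas ij) (hz ij).le (hdist ij) (hlt ij hij))
    (fun ij hij => (mgf_of_geometric (hmeas ij) (hz ij).le (hdist ij) (hlt ij hij)).trans_le
      (one_div_one_sub_mul_exp_sub_one_le (hz ij).le ht0.le ht3 (hzt ij hij))) (σ + a)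
  convert htail using 3
  simp only [Finset.sum_add_distrib, ← Finset.mul_sum, ← hσ, ← hν]
  ring

/-- Large deviation bound (upper tail) for a sum of independent geometric random
variables `x_{ij}` with `E x_{ij} = z_{ij} > 0`: for any real `a` and `t` with
`0 < t ≤ 1/3` and `t ≤ 1/(2 z_{ij})` for all `(i,j) ∈ S`,
`P(∑_{(i,j)∈S} x_{ij} ≥ σ + a) ≤ exp(-ta + 2t²(σ + ν))`, where
`σ = ∑_S z_{ij}` and `ν = ∑_S z_{ij}²`. -/
theorem geometric_sum_upper_tail
    {m n : ℕ} {Ω : Type*} [MeasurableSpace Ω] (μ : Measure Ω) [IsProbabilityMeasure μ]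
    (X : Fin m × Fin n → Ω → ℕ) (z : Fin m × Fin n → ℝ)
    (hz : ∀ ij, 0 < z ij)
    (hmeas : ∀ ij, Measurable (X ij))
    (hindep : iIndepFun X μ)
    (hdist : ∀ ij k, μ {ω | X ij ω = k}
      = ENNReal.ofReal ((1 / (1 + z ij)) * (z ij / (1 + z ij)) ^ k))
    (S : Finset (Fin m × Fin n)) (hS : S.Nonempty)
    (σ ν : ℝ) (hσ : σ = ∑ ij ∈ S, z ij) (hν : ν = ∑ ij ∈ S, (z ij) ^ 2)
    (a t : ℝ) (ht0 : 0 < t) (ht3 : t ≤ 1 / 3)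
    (htz : ∀ ij ∈ S, t ≤ 1 / (2 * z ij)) :
    μ {ω | σ + a ≤ (∑ ij ∈ S, (X ij ω : ℝ))}
      ≤ ENNReal.ofReal (Real.exp (-(t * a) + 2 * t ^ 2 * (σ + ν))) :=
  geometric_sum_upper_tail_general μ X z hz hmeas hindep hdist S σ ν hσ hν a t ht0 ht3 htz
end

section
/- Let Z = (z_{ij}) be a positive m × n real matrix with row sums r_i and column sums c_j, total sum N, and suppose there exist reals λ_1,…,λ_m, μ_1,…,μ_n with ln((z_{ij}+1)/z_{ij}) = λ_i + μ_j for all i, j. Let X = (x_{ij}) be the matrix of independent geometric random variables with E x_{ij} = z_{ij}. Then for every nonnegative integer matrix D = (d_{ij}) with row sums r_i and column sums c_j, P(X = D) = e^{−g(Z)}, where g(Z) = ∑_{i,j} [(z_{ij}+1)ln(z_{ij}+1) − z_{ij} ln z_{ij}]. In particular P(X = D) does not depend on D. -/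
open MeasureTheory ProbabilityTheory Finset

/-! Independence makes `P(X = D)` the product of the geometric weights
`(1 + z)⁻¹ · exp(-d · log((z + 1) / z))`. Under `log((z_{ij} + 1) / z_{ij}) = λ_i + μ_j`, the
exponent `∑ d_{ij} (λ_i + μ_j) = ∑ λ_i r_i + ∑ μ_j c_j` depends only on the margins of `D`, so
`D` may be replaced by `Z` itself, which has the same margins; what remains is `e^{-g(Z)}`. -/

section Margins

variable {ι κ : Type*} [Fintype ι] [Fintype κ]

theorem sum_mul_add_eq_sum_margins (f : ι × κ → ℝ) (a : ι → ℝ) (b : κ → ℝ) :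
    ∑ p, f p * (a p.1 + b p.2) = ∑ i, a i * ∑ j, f (i, j) + ∑ j, b j * ∑ i, f (i, j) := by
  simp only [mul_add, sum_add_distrib, Fintype.sum_prod_type, mul_sum]
  rw [sum_comm (f := fun i j => f (i, j) * b j)]
  simp only [mul_comm]

theorem sum_mul_add_eq_of_margins_eq {f g : ι × κ → ℝ}
    (hrow : ∀ i, ∑ j, f (i, j) = ∑ j, g (i, j)) (hcol : ∀ j, ∑ i, f (i, j) = ∑ i, g (i, j))
    (a : ι → ℝ) (b : κ → ℝ) :
    ∑ p, f p * (a p.1 + b p.2) = ∑ p, g p * (a p.1 + b p.2) := by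
  simp only [sum_mul_add_eq_sum_margins, hrow, hcol]

end Margins

theorem ProbabilityTheory.iIndepFun.measure_forall_eq {Ω ι β : Type*} [MeasurableSpace Ω]
    [Fintype ι] [MeasurableSpace β] [MeasurableSingletonClass β] {μ : Measure Ω}
    {X : ι → Ω → β} (hX : iIndepFun X μ) (d : ι → β) :
    μ {ω | ∀ i, X i ω = d i} = ∏ i, μ {ω | X i ω = d i} := by
  have hinter : {ω | ∀ i, X i ω = d i} = ⋂ i, X i ⁻¹' {d i} := by
    ext ω
    simp
  rw [hinter, hX.meas_iInter fun i => ⟨{d i}, measurableSet_singleton _, rfl⟩]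
  rfl

theorem geometric_weight_eq_exp {z : ℝ} (hz : 0 < z) (k : ℕ) :
    1 / (1 + z) * (z / (1 + z)) ^ k
      = Real.exp (-(Real.log (1 + z) + k * Real.log ((z + 1) / z))) := by
  have hz1 : 0 < 1 + z := by linarith
  have hlog : -Real.log ((z + 1) / z) = Real.log (z / (1 + z)) := by
    rw [← Real.log_inv, inv_div, add_comm]
  rw [neg_add, Real.exp_add, Real.exp_neg, Real.exp_log hz1, ← mul_neg, hlog, Real.exp_nat_mul,
    Real.exp_log (div_pos hz hz1), one_div]

theorem log_one_add_add_mul_log_div {z : ℝ} (hz : 0 < z) :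
    Real.log (1 + z) + z * Real.log ((z + 1) / z)
      = (z + 1) * Real.log (z + 1) - z * Real.log z := by
  rw [Real.log_div (by linarith) hz.ne', add_comm 1 z]
  ring

theorem geometric_uniform_on_tables_general
    {m n : ℕ} {Ω : Type*} [MeasurableSpace Ω] (μ : Measure Ω)
    (z : Fin m × Fin n → ℝ) (r : Fin m → ℝ) (c : Fin n → ℝ)
    (lam : Fin m → ℝ) (mu : Fin n → ℝ)
    (hz : ∀ ij, 0 < z ij)
    (hrow : ∀ i, ∑ j, z (i, j) = r i)
    (hcol : ∀ j, ∑ i, z (i, j) = c j)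
    (hopt : ∀ i j, Real.log ((z (i, j) + 1) / z (i, j)) = lam i + mu j)
    (X : Fin m × Fin n → Ω → ℕ)
    (hindep : iIndepFun X μ)
    (hdist : ∀ ij k, μ {ω | X ij ω = k}
      = ENNReal.ofReal ((1 / (1 + z ij)) * (z ij / (1 + z ij)) ^ k))
    (D : Fin m × Fin n → ℕ)
    (hDrow : ∀ i, (∑ j, (D (i, j) : ℝ)) = r i)
    (hDcol : ∀ j, (∑ i, (D (i, j) : ℝ)) = c j) :
    μ {ω | ∀ ij, X ij ω = D ij}
      = ENNReal.ofReal (Real.exp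
          (-(∑ ij, ((z ij + 1) * Real.log (z ij + 1) - z ij * Real.log (z ij))))) := by
  set θ : Fin m × Fin n → ℝ := fun p => Real.log ((z p + 1) / z p)
  have hmargin : ∑ p, (D p : ℝ) * θ p = ∑ p, z p * θ p := by
    simp only [θ, fun p : Fin m × Fin n => hopt p.1 p.2]
    exact sum_mul_add_eq_of_margins_eq (fun i => (hDrow i).trans (hrow i).symm)
      (fun j => (hDcol j).trans (hcol j).symm) lam mu
  calc μ {ω | ∀ ij, X ij ω = D ij}
      = ∏ p, ENNReal.ofReal (Real.exp (-(Real.log (1 + z p) + D p * θ p))) := by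
        simp only [hindep.measure_forall_eq, hdist, geometric_weight_eq_exp (hz _), θ]
    _ = ENNReal.ofReal (Real.exp (-∑ p, (Real.log (1 + z p) + D p * θ p))) := by
        rw [← ENNReal.ofReal_prod_of_nonneg fun p _ => (Real.exp_pos _).le, ← Real.exp_sum,
          sum_neg_distrib]
    _ = ENNReal.ofReal (Real.exp (-∑ p, (Real.log (1 + z p) + z p * θ p))) := by
        rw [sum_add_distrib, sum_add_distrib, hmargin]
    _ = _ := by
        simp only [θ, log_one_add_add_mul_log_div (hz _)]

/-- Let `Z = (z_{ij})` be a positive `m × n` matrix with row sums `r_i`, column sums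
`c_j`, satisfying `log((z_{ij}+1)/z_{ij}) = λ_i + μ_j` for all `i,j`. Let
`X = (x_{ij})` be a matrix of independent geometric random variables with
`E x_{ij} = z_{ij}`. Then for every contingency table `D` with margins `(R,C)`,
`P(X = D) = e^{-g(Z)}`, where `g(Z) = ∑_{i,j} ((z_{ij}+1) log(z_{ij}+1) - z_{ij} log z_{ij})`. -/
theorem geometric_uniform_on_tables
    {m n : ℕ} {Ω : Type*} [MeasurableSpace Ω] (μ : Measure Ω) [IsProbabilityMeasure μ]
    (z : Fin m × Fin n → ℝ) (r : Fin m → ℝ) (c : Fin n → ℝ)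
    (lam : Fin m → ℝ) (mu : Fin n → ℝ)
    (hz : ∀ ij, 0 < z ij)
    (hrow : ∀ i, ∑ j, z (i, j) = r i)
    (hcol : ∀ j, ∑ i, z (i, j) = c j)
    (hopt : ∀ i j, Real.log ((z (i, j) + 1) / z (i, j)) = lam i + mu j)
    (X : Fin m × Fin n → Ω → ℕ)
    (hmeas : ∀ ij, Measurable (X ij))
    (hindep : iIndepFun X μ)
    (hdist : ∀ ij k, μ {ω | X ij ω = k}
      = ENNReal.ofReal ((1 / (1 + z ij)) * (z ij / (1 + z ij)) ^ k))
    (D : Fin m × Fin n → ℕ)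
    (hDrow : ∀ i, (∑ j, (D (i, j) : ℝ)) = r i)
    (hDcol : ∀ j, (∑ i, (D (i, j) : ℝ)) = c j) :
    μ {ω | ∀ ij, X ij ω = D ij}
      = ENNReal.ofReal (Real.exp
          (-(∑ ij, ((z ij + 1) * Real.log (z ij + 1) - z ij * Real.log (z ij))))) :=
  geometric_uniform_on_tables_general μ z r c lam mu hz hrow hcol hopt X hindep hdist D hDrow hDcol
end
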